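/- arXiv:1508.04074 — 5 statements merged into one kernel-verified Lean document; each statement's English description precedes it below -/
import Mathlib

section
/- Let E and F be real Banach lattices, ε ≥ 0, and T : E → F a bounded linear operator such that ‖|Tx| ⊓ |Ty|‖ ≤ ε for all disjoint positive x, y in the closed unit ball of E. Then T is 4ε-disjointness preserving, i.e. ‖|Tx| ⊓ |Ty|‖ ≤ 4ε·max(‖x‖, ‖y‖) for all disjoint x, y ∈ E. Moreover, if T is positive, then T is ε-disjointness preserving. -/
/-!
Multiplication by `m > 0` is a lattice automorphism, so the hypothesis on the positive part of the
unit ball rescales to `‖|T a| ⊓ |T b|‖ ≤ ε m` for disjoint `a, b ≥ 0` of norm at most `m`.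
If `|x| ⊓ |y| = 0`, the four pairs formed from `x⁺, x⁻` and `y⁺, y⁻` are disjoint, and
`|T x| ⊓ |T y| ≤ ∑ |T x^±| ⊓ |T y^±|` gives the constant `4ε`. A positive `T` satisfies
`|T z| ≤ T |z|`, which reduces the estimate to the single disjoint pair `|x|, |y|`.
-/

open Filter Topology

lemma nonneg_of_two_pow_nsmul_nonneg {α : Type*} [Lattice α] [AddCommGroup α]
    [IsOrderedAddMonoid α] {a : α} : ∀ k : ℕ, 0 ≤ 2 ^ k • a → 0 ≤ a
  | 0, h => by simpa using h
  | k + 1, h => nonneg_of_two_pow_nsmul_nonneg k <| nsmul_two_semiclosed <| by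
      rwa [← mul_nsmul', ← pow_succ']

section OrderClosed

variable {E : Type*} [Lattice E] [AddCommGroup E] [IsOrderedAddMonoid E] [Module ℝ E]
  [TopologicalSpace E] [ContinuousSMul ℝ E] [OrderClosedTopology E]

/- The order is not assumed compatible with the real scalars. The positive cone is closed under
halving (`nsmul_two_semiclosed`), hence under nonnegative dyadic scalars, and being closed,
under all nonnegative scalars. -/
lemma smul_nonneg_of_orderClosedTopology {c : ℝ} (hc : 0 ≤ c) {x : E} (hx : 0 ≤ x) :
    0 ≤ c • x := by
  set s : ℕ → ℝ := fun k ↦ (⌊c * 2 ^ k⌋₊ : ℝ) / 2 ^ k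
  have hs : Tendsto s atTop (𝓝 c) :=
    (tendsto_nat_floor_mul_div_atTop hc).comp (tendsto_pow_atTop_atTop_of_one_lt one_lt_two)
  have hsx : ∀ k, 0 ≤ s k • x := fun k ↦ by
    refine nonneg_of_two_pow_nsmul_nonneg k ?_
    have : (2 ^ k) • (s k • x) = ⌊c * 2 ^ k⌋₊ • x := by
      rw [← Nat.cast_smul_eq_nsmul ℝ, ← Nat.cast_smul_eq_nsmul ℝ, smul_smul]
      congr 1
      simp only [s, Nat.cast_pow, Nat.cast_ofNat]
      exact mul_div_cancel₀ _ (by positivity)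
    rw [this]
    exact nsmul_nonneg hx _
  exact isClosed_Ici.mem_of_tendsto (hs.smul_const x) (Eventually.of_forall hsx)

lemma posSMulMono_of_orderClosedTopology : PosSMulMono ℝ E :=
  PosSMulMono.of_smul_nonneg fun _ hc _ hx ↦ smul_nonneg_of_orderClosedTopology hc hx

end OrderClosed

lemma inf_eq_zero_of_le_of_le {α : Type*} [Lattice α] [Zero α] {a b u v : α} (hu : 0 ≤ u)
    (hv : 0 ≤ v) (hua : u ≤ a) (hvb : v ≤ b) (hab : a ⊓ b = 0) : u ⊓ v = 0 :=
  le_antisymm (hab ▸ inf_le_inf hua hvb) (le_inf hu hv)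

section LatticeOrderedGroup

variable {α : Type*} [Lattice α] [AddCommGroup α] [IsOrderedAddMonoid α]

lemma posPart_le_abs (a : α) : a⁺ ≤ |a| :=
  sup_le (le_abs_self a) (abs_nonneg a)

lemma negPart_le_abs (a : α) : a⁻ ≤ |a| :=
  sup_le (neg_le_abs a) (abs_nonneg a)

lemma inf_add_le_inf_add_inf {a b c : α} (ha : 0 ≤ a) (hb : 0 ≤ b) (hc : 0 ≤ c) :
    a ⊓ (b + c) ≤ a ⊓ b + a ⊓ c := by
  rw [← sub_le_iff_le_add', sub_inf]
  refine sup_le ((sub_nonpos.2 inf_le_left).trans (le_inf ha hc)) (le_inf ?_ ?_)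
  · exact sub_le_iff_le_add.2 (inf_le_left.trans (le_add_of_nonneg_right hb))
  · exact sub_le_iff_le_add'.2 inf_le_right

lemma add_inf_add_le {a b c d : α} (ha : 0 ≤ a) (hb : 0 ≤ b) (hc : 0 ≤ c) (hd : 0 ≤ d) :
    (a + b) ⊓ (c + d) ≤ a ⊓ c + a ⊓ d + b ⊓ c + b ⊓ d :=
  calc (a + b) ⊓ (c + d) = (c + d) ⊓ (a + b) := inf_comm _ _
    _ ≤ (c + d) ⊓ a + (c + d) ⊓ b := inf_add_le_inf_add_inf (add_nonneg hc hd) ha hb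
    _ = a ⊓ (c + d) + b ⊓ (c + d) := by rw [inf_comm, inf_comm (c + d) b]
    _ ≤ (a ⊓ c + a ⊓ d) + (b ⊓ c + b ⊓ d) :=
        add_le_add (inf_add_le_inf_add_inf ha hc hd) (inf_add_le_inf_add_inf hb hc hd)
    _ = a ⊓ c + a ⊓ d + b ⊓ c + b ⊓ d := by abel

end LatticeOrderedGroup

section OrderedModule

variable {𝕜 V : Type*} [Semifield 𝕜] [LinearOrder 𝕜] [IsStrictOrderedRing 𝕜] [Lattice V]

lemma smul_inf_of_pos [MulAction 𝕜 V] [PosSMulMono 𝕜 V] {c : 𝕜} (hc : 0 < c) (x y : V) :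
    c • (x ⊓ y) = c • x ⊓ c • y :=
  (OrderIso.smulRight hc).map_inf x y

lemma abs_smul_of_nonneg [AddCommGroup V] [Module 𝕜 V] [PosSMulMono 𝕜 V] {c : 𝕜} (hc : 0 ≤ c)
    (x : V) : |c • x| = c • |x| := by
  rcases hc.eq_or_lt with rfl | hc
  · show (0 • x) ⊔ -(0 • x) = 0 • (x ⊔ -x)
    rw [zero_smul, zero_smul, neg_zero, sup_idem]
  · show c • x ⊔ -(c • x) = c • (x ⊔ -x)
    rw [← smul_neg]
    exact ((OrderIso.smulRight hc).map_sup x (-x)).symm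

end OrderedModule

lemma norm_le_norm_of_nonneg_of_le {α : Type*} [NormedAddCommGroup α] [Lattice α]
    [HasSolidNorm α] [IsOrderedAddMonoid α] {a b : α} (ha : 0 ≤ a) (hab : a ≤ b) : ‖a‖ ≤ ‖b‖ :=
  norm_le_norm_of_abs_le_abs (abs_le_abs_of_nonneg ha hab)

lemma abs_map_le_map_abs {E F G : Type*} [Lattice E] [AddCommGroup E] [IsOrderedAddMonoid E]
    [Lattice F] [AddCommGroup F] [IsOrderedAddMonoid F] [FunLike G E F] [AddMonoidHomClass G E F]
    {T : G} (hT : ∀ x, 0 ≤ x → 0 ≤ T x) (x : E) : |T x| ≤ T |x| := by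
  have mono : ∀ {u v}, u ≤ v → T u ≤ T v := fun {u v} huv ↦ by
    simpa [map_sub] using hT (v - u) (sub_nonneg.2 huv)
  exact abs_le'.2 ⟨mono (le_abs_self x), map_neg T x ▸ mono (neg_le_abs x)⟩

section Operator

variable {E F G : Type*}
  [NormedAddCommGroup E] [Lattice E] [NormedSpace ℝ E] [PosSMulMono ℝ E]
  [NormedAddCommGroup F] [Lattice F] [IsOrderedAddMonoid F] [NormedSpace ℝ F] [PosSMulMono ℝ F]
  [FunLike G E F] [LinearMapClass G ℝ E F] {T : G} {ε : ℝ}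

lemma norm_inf_abs_map_le_of_inf_eq_zero
    (hT : ∀ x y : E, 0 ≤ x → 0 ≤ y → ‖x‖ ≤ 1 → ‖y‖ ≤ 1 → x ⊓ y = 0 → ‖|T x| ⊓ |T y|‖ ≤ ε)
    {a b : E} {m : ℝ} (ha : 0 ≤ a) (hb : 0 ≤ b) (hab : a ⊓ b = 0) (ham : ‖a‖ ≤ m)
    (hbm : ‖b‖ ≤ m) : ‖|T a| ⊓ |T b|‖ ≤ ε * m := by
  rcases ((norm_nonneg a).trans ham).eq_or_lt with rfl | hm
  · simp [norm_le_zero_iff.1 ham, norm_le_zero_iff.1 hbm]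
  have hm' : 0 < m⁻¹ := inv_pos.2 hm
  have unit : ∀ z : E, ‖z‖ ≤ m → ‖m⁻¹ • z‖ ≤ 1 := fun z hz ↦ by
    rwa [norm_smul, Real.norm_of_nonneg hm'.le, inv_mul_le_one₀ hm]
  have key := hT _ _ (smul_nonneg hm'.le ha) (smul_nonneg hm'.le hb) (unit a ham) (unit b hbm)
    (by rw [← smul_inf_of_pos hm', hab, smul_zero])
  have scale : |T a| ⊓ |T b| = m • (|T (m⁻¹ • a)| ⊓ |T (m⁻¹ • b)|) := by
    rw [map_smul, map_smul, abs_smul_of_nonneg hm'.le, abs_smul_of_nonneg hm'.le,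
      ← smul_inf_of_pos hm', smul_inv_smul₀ hm.ne']
  rw [scale, norm_smul, Real.norm_of_nonneg hm.le, mul_comm]
  exact mul_le_mul_of_nonneg_right key hm.le

variable [IsOrderedAddMonoid E] [HasSolidNorm E] [HasSolidNorm F]

theorem norm_inf_abs_map_le_four_mul
    (hT : ∀ x y : E, 0 ≤ x → 0 ≤ y → ‖x‖ ≤ 1 → ‖y‖ ≤ 1 → x ⊓ y = 0 → ‖|T x| ⊓ |T y|‖ ≤ ε)
    {x y : E} (hxy : |x| ⊓ |y| = 0) : ‖|T x| ⊓ |T y|‖ ≤ 4 * ε * max ‖x‖ ‖y‖ := by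
  set m := max ‖x‖ ‖y‖
  have part : ∀ u v, 0 ≤ u → 0 ≤ v → u ≤ |x| → v ≤ |y| → ‖|T u| ⊓ |T v|‖ ≤ ε * m :=
    fun u v hu hv hux hvy ↦ norm_inf_abs_map_le_of_inf_eq_zero hT hu hv
      (inf_eq_zero_of_le_of_le hu hv hux hvy hxy)
      ((norm_le_norm_of_nonneg_of_le hu hux).trans (norm_abs_eq_norm x ▸ le_max_left _ _))
      ((norm_le_norm_of_nonneg_of_le hv hvy).trans (norm_abs_eq_norm y ▸ le_max_right _ _))
  have split : ∀ z, |T z| ≤ |T z⁺| + |T z⁻| := fun z ↦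
    calc |T z| = |T z⁺ + -T z⁻| := by rw [← sub_eq_add_neg, ← map_sub, posPart_sub_negPart]
      _ ≤ |T z⁺| + |T z⁻| := (abs_add_le _ _).trans_eq (by rw [abs_neg])
  have hle : |T x| ⊓ |T y| ≤
      |T x⁺| ⊓ |T y⁺| + |T x⁺| ⊓ |T y⁻| + |T x⁻| ⊓ |T y⁺| + |T x⁻| ⊓ |T y⁻| :=
    (inf_le_inf (split x) (split y)).trans
      (add_inf_add_le (abs_nonneg _) (abs_nonneg _) (abs_nonneg _) (abs_nonneg _))
  calc ‖|T x| ⊓ |T y|‖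
      ≤ ‖|T x⁺| ⊓ |T y⁺| + |T x⁺| ⊓ |T y⁻| + |T x⁻| ⊓ |T y⁺| + |T x⁻| ⊓ |T y⁻|‖ :=
        norm_le_norm_of_nonneg_of_le (le_inf (abs_nonneg _) (abs_nonneg _)) hle
    _ ≤ ‖|T x⁺| ⊓ |T y⁺|‖ + ‖|T x⁺| ⊓ |T y⁻|‖ + ‖|T x⁻| ⊓ |T y⁺|‖ + ‖|T x⁻| ⊓ |T y⁻|‖ :=
        norm_add₄_le
    _ ≤ ε * m + ε * m + ε * m + ε * m := by
        gcongr <;> apply part <;> first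
          | exact posPart_nonneg _ | exact negPart_nonneg _
          | exact posPart_le_abs _ | exact negPart_le_abs _
    _ = 4 * ε * m := by ring

theorem norm_inf_abs_map_le_of_map_nonneg
    (hT : ∀ x y : E, 0 ≤ x → 0 ≤ y → ‖x‖ ≤ 1 → ‖y‖ ≤ 1 → x ⊓ y = 0 → ‖|T x| ⊓ |T y|‖ ≤ ε)
    (hpos : ∀ x, 0 ≤ x → 0 ≤ T x) {x y : E} (hxy : |x| ⊓ |y| = 0) :
    ‖|T x| ⊓ |T y|‖ ≤ ε * max ‖x‖ ‖y‖ := by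
  have hle : |T x| ⊓ |T y| ≤ |T (|x|)| ⊓ |T (|y|)| := by
    rw [abs_of_nonneg (hpos _ (abs_nonneg x)), abs_of_nonneg (hpos _ (abs_nonneg y))]
    exact inf_le_inf (abs_map_le_map_abs hpos x) (abs_map_le_map_abs hpos y)
  calc ‖|T x| ⊓ |T y|‖ ≤ ‖|T (|x|)| ⊓ |T (|y|)|‖ :=
        norm_le_norm_of_nonneg_of_le (le_inf (abs_nonneg _) (abs_nonneg _)) hle
    _ ≤ ε * max ‖x‖ ‖y‖ :=
        norm_inf_abs_map_le_of_inf_eq_zero hT (abs_nonneg x) (abs_nonneg y) hxy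
          ((norm_abs_eq_norm x).trans_le (le_max_left _ _))
          ((norm_abs_eq_norm y).trans_le (le_max_right _ _))

end Operator

theorem stmt0_general (E F : Type*)
    [NormedAddCommGroup E] [Lattice E] [HasSolidNorm E] [IsOrderedAddMonoid E] [NormedSpace ℝ E]
    [NormedAddCommGroup F] [Lattice F] [HasSolidNorm F] [IsOrderedAddMonoid F] [NormedSpace ℝ F]
    (ε : ℝ) (T : E →L[ℝ] F)
    (h : ∀ x y : E, 0 ≤ x → 0 ≤ y → ‖x‖ ≤ 1 → ‖y‖ ≤ 1 → x ⊓ y = 0 →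
      ‖|T x| ⊓ |T y|‖ ≤ ε) :
    (∀ x y : E, |x| ⊓ |y| = 0 → ‖|T x| ⊓ |T y|‖ ≤ 4 * ε * max ‖x‖ ‖y‖) ∧
    ((∀ x : E, 0 ≤ x → 0 ≤ T x) →
      ∀ x y : E, |x| ⊓ |y| = 0 → ‖|T x| ⊓ |T y|‖ ≤ ε * max ‖x‖ ‖y‖) := by
  have := posSMulMono_of_orderClosedTopology (E := E)
  have := posSMulMono_of_orderClosedTopology (E := F)
  exact ⟨fun _ _ ↦ norm_inf_abs_map_le_four_mul h,
    fun hpos _ _ ↦ norm_inf_abs_map_le_of_map_nonneg h hpos⟩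

/-- If `T : E → F` satisfies `‖|Tx| ⊓ |Ty|‖ ≤ ε` for all disjoint positive
`x, y` in the closed unit ball of `E`, then `T` is `4ε`-disjointness preserving; moreover, if
`T` is positive, then `T` is `ε`-disjointness preserving. -/
theorem stmt0 (E F : Type*)
    [NormedAddCommGroup E] [Lattice E] [HasSolidNorm E] [IsOrderedAddMonoid E] [NormedSpace ℝ E] [CompleteSpace E]
    [NormedAddCommGroup F] [Lattice F] [HasSolidNorm F] [IsOrderedAddMonoid F] [NormedSpace ℝ F] [CompleteSpace F]
    (ε : ℝ) (hε : 0 ≤ ε) (T : E →L[ℝ] F)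
    (h : ∀ x y : E, 0 ≤ x → 0 ≤ y → ‖x‖ ≤ 1 → ‖y‖ ≤ 1 → x ⊓ y = 0 →
      ‖|T x| ⊓ |T y|‖ ≤ ε) :
    (∀ x y : E, |x| ⊓ |y| = 0 → ‖|T x| ⊓ |T y|‖ ≤ 4 * ε * max ‖x‖ ‖y‖) ∧
    ((∀ x : E, 0 ≤ x → 0 ≤ T x) →
      ∀ x y : E, |x| ⊓ |y| = 0 → ‖|T x| ⊓ |T y|‖ ≤ ε * max ‖x‖ ‖y‖) :=
  stmt0_general E F ε T h
end

section
/- Let E and F be real Banach lattices, ε ≥ 0, and T : E → F a bounded linear operator which is ε-disjointness preserving. Then for all x, y ∈ E (not necessarily disjoint), ‖|Tx| ⊓ |Ty|‖ ≤ 4·(ε·max(‖x‖, ‖y‖) + ‖T‖·‖|x| ⊓ |y|‖). -/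
/-!
Truncating `x` at `(|x| - |y|)⁺` and `y` at `(|y| - |x|)⁺` produces a disjoint pair
`x₁, y₁` with `|x₁| ≤ |x|`, `|y₁| ≤ |y|` and both errors `|x - x₁|, |y - y₁|` bounded by
`|x| ⊓ |y|`. Since `‖|a| ⊓ |b|‖` is `1`-Lipschitz in each of `a, b` for a solid norm,
`‖|Tx| ⊓ |Ty|‖ ≤ ‖|Tx₁| ⊓ |Ty₁|‖ + ‖T‖ ‖x - x₁‖ + ‖T‖ ‖y - y₁‖`, and the first term is at most
`ε max(‖x‖, ‖y‖)` by `ε`-disjointness preservation.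
-/

section LatticeOrderedGroup

variable {α : Type*} [Lattice α] [AddCommGroup α] [IsOrderedAddMonoid α]

lemma abs_sup_neg_inf_le (x : α) {a : α} (ha : 0 ≤ a) : |x ⊓ a ⊔ -a| ≤ a :=
  abs_le'.2 ⟨sup_le inf_le_right (neg_nonpos.2 ha |>.trans ha), neg_le.1 le_sup_right⟩

lemma abs_sub_sup_neg_inf_le (x a : α) : |x - (x ⊓ a ⊔ -a)| ≤ (|x| - a)⁺ := by
  have hsplit : x - (x ⊓ a ⊔ -a) = (x - a)⁺ ⊓ (x + a) := by
    rw [sub_sup, sub_inf, sub_self, sub_neg_eq_add, posPart_def, sup_comm]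
  rw [hsplit]
  refine abs_le'.2 ⟨inf_le_left.trans (posPart_mono (by gcongr; exact le_abs_self x)), ?_⟩
  rw [neg_inf]
  refine sup_le ((neg_nonpos.2 (posPart_nonneg _)).trans (posPart_nonneg _))
    (le_trans ?_ (le_posPart _))
  rw [neg_add', sub_le_sub_iff_right]
  exact neg_le_abs x

theorem exists_disjoint_abs_sub_le_inf (x y : α) :
    ∃ x₁ y₁ : α, |x₁| ⊓ |y₁| = 0 ∧ |x₁| ≤ |x| ∧ |y₁| ≤ |y| ∧
      |x - x₁| ≤ |x| ⊓ |y| ∧ |y - y₁| ≤ |x| ⊓ |y| := by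
  set a := (|x| - |y|)⁺
  set b := (|y| - |x|)⁺
  have hab : a ⊓ b = 0 := by
    simp only [a, b]
    rw [← neg_sub |x| |y|, posPart_neg]; exact posPart_inf_negPart_eq_zero _
  have hxa : |x| - a = |x| ⊓ |y| := (inf_eq_sub_posPart_sub _ _).symm
  have hyb : |y| - b = |x| ⊓ |y| := by rw [inf_comm]; exact (inf_eq_sub_posPart_sub _ _).symm
  have hinf : 0 ≤ |x| ⊓ |y| := le_inf (abs_nonneg x) (abs_nonneg y)
  have hx₁ := abs_sup_neg_inf_le x (posPart_nonneg (|x| - |y|))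
  have hy₁ := abs_sup_neg_inf_le y (posPart_nonneg (|y| - |x|))
  refine ⟨x ⊓ a ⊔ -a, y ⊓ b ⊔ -b, ?_, hx₁.trans ?_, hy₁.trans ?_, ?_, ?_⟩
  · exact le_antisymm ((inf_le_inf hx₁ hy₁).trans hab.le) (le_inf (abs_nonneg _) (abs_nonneg _))
  · exact sup_le (sub_le_self _ (abs_nonneg y)) (abs_nonneg x)
  · exact sup_le (sub_le_self _ (abs_nonneg x)) (abs_nonneg y)
  · exact (abs_sub_sup_neg_inf_le x a).trans (by rw [hxa, posPart_eq_self.2 hinf])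
  · exact (abs_sub_sup_neg_inf_le y b).trans (by rw [hyb, posPart_eq_self.2 hinf])

end LatticeOrderedGroup

lemma norm_le_norm_of_abs_le {E : Type*} [NormedAddCommGroup E] [Lattice E] [HasSolidNorm E]
    {a b : E} (h : |a| ≤ b) : ‖a‖ ≤ ‖b‖ :=
  norm_le_norm_of_abs_le_abs (h.trans (le_abs_self b))

lemma norm_abs_inf_abs_le {E : Type*} [NormedAddCommGroup E] [Lattice E] [IsOrderedAddMonoid E]
    [HasSolidNorm E] (a b c d : E) :
    ‖|a| ⊓ |b|‖ ≤ ‖|c| ⊓ |d|‖ + ‖a - c‖ + ‖b - d‖ := by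
  calc ‖|a| ⊓ |b|‖ ≤ ‖|c| ⊓ |d|‖ + ‖|a| ⊓ |b| - |c| ⊓ |d|‖ := norm_le_insert' _ _
    _ ≤ ‖|c| ⊓ |d|‖ + (‖|a| - |c|‖ + ‖|b| - |d|‖) := by
      gcongr; exact norm_inf_sub_inf_le_add_norm ..
    _ ≤ ‖|c| ⊓ |d|‖ + ‖a - c‖ + ‖b - d‖ := by
      rw [← add_assoc]; gcongr <;> exact norm_abs_sub_abs _ _

theorem stmt1_general (E F : Type*)
    [NormedAddCommGroup E] [Lattice E] [IsOrderedAddMonoid E] [HasSolidNorm E] [NormedSpace ℝ E]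
    [NormedAddCommGroup F] [Lattice F] [IsOrderedAddMonoid F] [HasSolidNorm F] [NormedSpace ℝ F]
    (ε : ℝ) (hε : 0 ≤ ε) (T : E →L[ℝ] F)
    (hDP : ∀ x y : E, |x| ⊓ |y| = 0 → ‖|T x| ⊓ |T y|‖ ≤ ε * max ‖x‖ ‖y‖) :
    ∀ x y : E, ‖|T x| ⊓ |T y|‖ ≤ 4 * (ε * max ‖x‖ ‖y‖ + ‖T‖ * ‖|x| ⊓ |y|‖) := by
  intro x y
  obtain ⟨x₁, y₁, hdisj, hx₁, hy₁, hx, hy⟩ := exists_disjoint_abs_sub_le_inf x y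
  have hT {u v : E} (h : |u - v| ≤ |x| ⊓ |y|) : ‖T u - T v‖ ≤ ‖T‖ * ‖|x| ⊓ |y|‖ := by
    rw [← map_sub]
    exact T.le_opNorm_of_le (norm_le_norm_of_abs_le h)
  have hA : 0 ≤ ε * max ‖x‖ ‖y‖ := by positivity
  have hB : 0 ≤ ‖T‖ * ‖|x| ⊓ |y|‖ := by positivity
  calc ‖|T x| ⊓ |T y|‖ ≤ ‖|T x₁| ⊓ |T y₁|‖ + ‖T x - T x₁‖ + ‖T y - T y₁‖ :=
        norm_abs_inf_abs_le ..
    _ ≤ ε * max ‖x‖ ‖y‖ + ‖T‖ * ‖|x| ⊓ |y|‖ + ‖T‖ * ‖|x| ⊓ |y|‖ := by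
      gcongr
      · exact (hDP x₁ y₁ hdisj).trans (by gcongr <;> exact norm_le_norm_of_abs_le_abs ‹_›)
      · exact hT hx
      · exact hT hy
    _ ≤ 4 * (ε * max ‖x‖ ‖y‖ + ‖T‖ * ‖|x| ⊓ |y|‖) := by linarith

/-- An `ε`-disjointness preserving operator almost preserves
almost-disjointness: `‖|Tx| ⊓ |Ty|‖ ≤ 4(ε max(‖x‖,‖y‖) + ‖T‖ ‖|x| ⊓ |y|‖)` for all `x, y`. -/
theorem stmt1 (E F : Type*)
    [NormedAddCommGroup E] [Lattice E] [IsOrderedAddMonoid E] [HasSolidNorm E] [NormedSpace ℝ E] [CompleteSpace E]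
    [NormedAddCommGroup F] [Lattice F] [IsOrderedAddMonoid F] [HasSolidNorm F] [NormedSpace ℝ F] [CompleteSpace F]
    (ε : ℝ) (hε : 0 ≤ ε) (T : E →L[ℝ] F)
    (hDP : ∀ x y : E, |x| ⊓ |y| = 0 → ‖|T x| ⊓ |T y|‖ ≤ ε * max ‖x‖ ‖y‖) :
    ∀ x y : E, ‖|T x| ⊓ |T y|‖ ≤ 4 * (ε * max ‖x‖ ‖y‖ + ‖T‖ * ‖|x| ⊓ |y|‖) :=
  stmt1_general E F ε hε T hDP
end

section
/- Let b₀, b₁, …, b_n be non-negative real numbers. Then 𝔼_S min{ Σ_{i ∈ S} b_i , Σ_{i ∉ S} b_i } ≤ (Σ_{i=0}^n b_i − max_{0 ≤ i ≤ n} b_i) ≤ 2^8 · 𝔼_S min{ Σ_{i ∈ S} b_i , Σ_{i ∉ S} b_i }, where 𝔼_S denotes the average over all 2^{n+1} subsets S of {0, 1, …, n}, each taken with equal weight 2^{-(n+1)}, and S^c = {0, …, n} \ S. -/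
/-!
Write `T = ∑ i, b i`, `M = max b = b j` and `X_S = ∑ i ∈ S, b i`. Each term `min (X_S, T - X_S)` is at
most `T - M`: the side not containing `j` misses `b j`. Conversely `min (x, T - x) ≥ x (T - x) / T`, and
averaging over `S` gives `𝔼 X_S (T - X_S) = (T² - ∑ b i²) / 4 ≥ T (T - M) / 4`, since the variance of
`2 X_S - T` is `∑ b i²` and `∑ b i² ≤ M T`. Hence the average lies in `[(T - M) / 4, T - M]`.
-/

open Finset

lemma mul_le_min_mul_add {a c : ℝ} (ha : 0 ≤ a) (hc : 0 ≤ c) : a * c ≤ min a c * (a + c) := by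
  rcases le_total a c with h | h
  · rw [min_eq_left h]; nlinarith
  · rw [min_eq_right h]; nlinarith

namespace Finset

variable {ι : Type*}

lemma sum_powerset_sq_two_mul_sum_sub [DecidableEq ι] (u : Finset ι) (g : ι → ℝ) :
    ∑ S ∈ u.powerset, (2 * ∑ i ∈ S, g i - ∑ i ∈ u, g i) ^ 2 = 2 ^ #u * ∑ i ∈ u, g i ^ 2 := by
  induction u using Finset.induction_on with
  | empty => simp
  | insert a s ha ih =>
    rw [sum_powerset_insert ha, sum_insert ha, sum_insert ha, card_insert_of_notMem ha]
    -- with or without `a`, the deviation `2 ∑ S - ∑ s` moves by `± g a`, so the cross terms cancel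
    have h_with : ∀ S ∈ s.powerset, (2 * ∑ i ∈ insert a S, g i - (g a + ∑ i ∈ s, g i)) ^ 2 =
        (2 * ∑ i ∈ S, g i - ∑ i ∈ s, g i) ^ 2
          + 2 * g a * (2 * ∑ i ∈ S, g i - ∑ i ∈ s, g i) + g a ^ 2 := by
      intro S hS
      rw [sum_insert fun h => ha (mem_powerset.1 hS h)]
      ring
    have h_without : ∀ S ∈ s.powerset, (2 * ∑ i ∈ S, g i - (g a + ∑ i ∈ s, g i)) ^ 2 =
        (2 * ∑ i ∈ S, g i - ∑ i ∈ s, g i) ^ 2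
          - 2 * g a * (2 * ∑ i ∈ S, g i - ∑ i ∈ s, g i) + g a ^ 2 := fun _ _ => by ring
    rw [sum_congr rfl h_with, sum_congr rfl h_without]
    simp only [sum_add_distrib, sum_sub_distrib, sum_const, card_powerset, nsmul_eq_mul, ih]
    push_cast
    ring

variable [Fintype ι] [DecidableEq ι]

lemma four_mul_sum_powerset_sum_mul_sum_compl (g : ι → ℝ) :
    4 * ∑ S ∈ (univ : Finset ι).powerset, (∑ i ∈ S, g i) * ∑ i ∈ Sᶜ, g i =
      2 ^ Fintype.card ι * ((∑ i, g i) ^ 2 - ∑ i, g i ^ 2) := by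
  have h_sq := sum_powerset_sq_two_mul_sum_sub (univ : Finset ι) g
  have h_term : ∀ S : Finset ι, 4 * ((∑ i ∈ S, g i) * ∑ i ∈ Sᶜ, g i) =
      (∑ i, g i) ^ 2 - (2 * ∑ i ∈ S, g i - ∑ i, g i) ^ 2 := fun S => by
    rw [← sum_add_sum_compl S g]; ring
  rw [mul_sum, sum_congr rfl fun S _ => h_term S, sum_sub_distrib, h_sq, sum_const,
    card_powerset, card_univ, nsmul_eq_mul]
  push_cast
  ring

variable {b : ι → ℝ}

lemma sum_compl_le_sum_sub (hb : ∀ i, 0 ≤ b i) {S : Finset ι} {j : ι} (hj : j ∈ S) :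
    ∑ i ∈ Sᶜ, b i ≤ ∑ i, b i - b j := by
  rw [← sum_add_sum_compl S b]
  linarith [single_le_sum (fun i _ => hb i) hj]

lemma min_sum_sum_compl_le (hb : ∀ i, 0 ≤ b i) (S : Finset ι) (j : ι) :
    min (∑ i ∈ S, b i) (∑ i ∈ Sᶜ, b i) ≤ ∑ i, b i - b j := by
  by_cases hj : j ∈ S
  · exact (min_le_right _ _).trans (sum_compl_le_sum_sub hb hj)
  · refine (min_le_left _ _).trans ?_
    simpa using sum_compl_le_sum_sub hb (S := Sᶜ) (mem_compl.2 hj)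

lemma sum_powerset_min_le (hb : ∀ i, 0 ≤ b i) (j : ι) :
    ∑ S ∈ (univ : Finset ι).powerset, min (∑ i ∈ S, b i) (∑ i ∈ Sᶜ, b i) ≤
      2 ^ Fintype.card ι * (∑ i, b i - b j) := by
  calc _ ≤ ∑ _S ∈ (univ : Finset ι).powerset, (∑ i, b i - b j) :=
        sum_le_sum fun S _ => min_sum_sum_compl_le hb S j
    _ = _ := by simp [mul_sub]

lemma mul_sum_sub_le_four_mul_sum_powerset_min (hb : ∀ i, 0 ≤ b i) {j : ι}
    (hj : ∀ i, b i ≤ b j) :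
    2 ^ Fintype.card ι * (∑ i, b i - b j) ≤
      4 * ∑ S ∈ (univ : Finset ι).powerset, min (∑ i ∈ S, b i) (∑ i ∈ Sᶜ, b i) := by
  set T := ∑ i, b i
  have h_bj_le : b j ≤ T := single_le_sum (fun i _ => hb i) (mem_univ j)
  rcases (le_trans (hb j) h_bj_le).eq_or_lt with hT | hT
  · have h_gap : T - b j = 0 := by linarith [hb j]
    rw [h_gap, mul_zero]
    exact mul_nonneg zero_le_four <|
      sum_nonneg fun S _ => le_min (sum_nonneg fun i _ => hb i) (sum_nonneg fun i _ => hb i)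
  have h_sq_le : ∑ i, b i ^ 2 ≤ b j * T := by
    rw [mul_sum]
    exact sum_le_sum fun i _ => by nlinarith [hj i, hb i]
  have h_prod_le : ∑ S ∈ (univ : Finset ι).powerset, (∑ i ∈ S, b i) * ∑ i ∈ Sᶜ, b i ≤
      (∑ S ∈ (univ : Finset ι).powerset, min (∑ i ∈ S, b i) (∑ i ∈ Sᶜ, b i)) * T := by
    rw [sum_mul]
    refine sum_le_sum fun S _ => ?_
    rw [show T = _ from (sum_add_sum_compl S b).symm]
    exact mul_le_min_mul_add (sum_nonneg fun i _ => hb i) (sum_nonneg fun i _ => hb i)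
  refine le_of_mul_le_mul_right ?_ hT
  calc 2 ^ Fintype.card ι * (T - b j) * T = 2 ^ Fintype.card ι * (T ^ 2 - b j * T) := by ring
    _ ≤ 2 ^ Fintype.card ι * (T ^ 2 - ∑ i, b i ^ 2) := by gcongr
    _ = 4 * ∑ S ∈ (univ : Finset ι).powerset, (∑ i ∈ S, b i) * ∑ i ∈ Sᶜ, b i :=
      (four_mul_sum_powerset_sum_mul_sum_compl b).symm
    _ ≤ 4 * (∑ S ∈ (univ : Finset ι).powerset, min (∑ i ∈ S, b i) (∑ i ∈ Sᶜ, b i)) * T := by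
      linarith

end Finset

/-- **probabilistic inequality.** For non-negative reals `b₀, …, b_n`,
`𝔼_S min(Σ_{i∈S} b_i, Σ_{i∉S} b_i) ≤ Σ_i b_i - max_i b_i ≤ 2^8 𝔼_S min(Σ_{i∈S} b_i, Σ_{i∉S} b_i)`,
where the expectation is the uniform average over all subsets `S ⊆ {0, …, n}`. -/
theorem stmt2 (n : ℕ) (b : Fin (n + 1) → ℝ) (hb : ∀ i, 0 ≤ b i) :
    (2 ^ (n + 1) : ℝ)⁻¹ *
        ∑ S ∈ (univ : Finset (Fin (n + 1))).powerset,
          min (∑ i ∈ S, b i) (∑ i ∈ Sᶜ, b i) ≤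
      (∑ i, b i) - (univ : Finset (Fin (n + 1))).sup' univ_nonempty b ∧
    (∑ i, b i) - (univ : Finset (Fin (n + 1))).sup' univ_nonempty b ≤
      2 ^ 8 * ((2 ^ (n + 1) : ℝ)⁻¹ *
        ∑ S ∈ (univ : Finset (Fin (n + 1))).powerset,
          min (∑ i ∈ S, b i) (∑ i ∈ Sᶜ, b i)) := by
  obtain ⟨j, -, hj⟩ := exists_mem_eq_sup' univ_nonempty b
  have h_max : ∀ i, b i ≤ b j := fun i => hj ▸ le_sup' b (mem_univ i)
  have h_upper := sum_powerset_min_le hb j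
  have h_lower := mul_sum_sub_le_four_mul_sum_powerset_min hb h_max
  rw [Fintype.card_fin] at h_upper h_lower
  rw [hj]
  have h_pow : (0 : ℝ) < 2 ^ (n + 1) := by positivity
  constructor
  · rwa [inv_mul_le_iff₀ h_pow]
  · rw [← mul_assoc, mul_comm (2 ^ 8 : ℝ), mul_assoc, le_inv_mul_iff₀ h_pow]
    linarith
end

section
/- Let F be a real Banach lattice, n ∈ ℕ, ε ≥ 0, and T : ℓ_∞^n → F a positive bounded linear operator which is ε-disjointness preserving. Then there exists a disjointness preserving linear operator S : ℓ_∞^n → F such that 0 ≤ S ≤ T (i.e. S and T − S are positive) and ‖T − S‖ ≤ 256·ε. -/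
/-!
Let `fᵢ = T eᵢ ≥ 0`, `u = ∑ fᵢ` and `dᵢ = fᵢ ⊓ (u - fᵢ)`. The parts `fᵢ - dᵢ = (2fᵢ - u)⁺` are
pairwise disjoint, so `S x = ∑ xᵢ (fᵢ - dᵢ)` is disjointness preserving, `0 ≤ S ≤ T`, and
`‖T - S‖ ≤ ‖∑ dᵢ‖`. To bound `∑ dᵢ`, average over all `2ⁿ` splittings `A, Aᶜ`, for which
`‖T 1_A ⊓ T 1_Aᶜ‖ ≤ ε`. A sum of infima `∑_A (T 1_A ⊓ T 1_Aᶜ)` is the infimum over the choices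
`C A ∈ {A, Aᶜ}` of `∑_A T 1_{C A} = ∑ⱼ cⱼ fⱼ`. Any two indices are separated by half of the
splittings, so every count `cⱼ` except the smallest is at least `2ⁿ/4`, which is enough to
dominate `2ⁿ/8 · ∑ dᵢ`. Hence `‖∑ dᵢ‖ ≤ 8ε`.
-/

open Finset
open scoped symmDiff

section LatticeOrderedGroup

variable {F : Type*} [Lattice F] [AddCommGroup F] [IsOrderedAddMonoid F]

theorem add_inf_le_inf_add_inf {x y z : F} (hx : 0 ≤ x) (hy : 0 ≤ y) (hz : 0 ≤ z) :
    (x + y) ⊓ z ≤ x ⊓ z + y ⊓ z := by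
  rw [← sub_le_iff_le_add', sub_inf]
  refine sup_le ?_ ((sub_nonpos.2 inf_le_right).trans (le_inf hy hz))
  rw [inf_sub, add_sub_cancel_left]
  exact inf_le_inf_left y (sub_le_self z hx)

theorem sum_inf_le_sum_inf {ι : Type*} (s : Finset ι) {b : ι → F} (hb : ∀ i ∈ s, 0 ≤ b i)
    {a : F} (ha : 0 ≤ a) : (∑ i ∈ s, b i) ⊓ a ≤ ∑ i ∈ s, b i ⊓ a :=
  Finset.le_sum_of_subadditive_on_pred (· ⊓ a) (0 ≤ ·) inf_le_left
    (fun _ _ hx hy => add_inf_le_inf_add_inf hx hy ha) (fun _ _ => add_nonneg) b hb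

theorem sum_inf_sum_eq_zero {ι κ : Type*} {s : Finset ι} {t : Finset κ} {a : ι → F}
    {b : κ → F} (ha : ∀ i ∈ s, 0 ≤ a i) (hb : ∀ j ∈ t, 0 ≤ b j)
    (hab : ∀ i ∈ s, ∀ j ∈ t, a i ⊓ b j = 0) : (∑ i ∈ s, a i) ⊓ ∑ j ∈ t, b j = 0 := by
  refine le_antisymm ?_ (le_inf (sum_nonneg ha) (sum_nonneg hb))
  calc (∑ i ∈ s, a i) ⊓ ∑ j ∈ t, b j ≤ ∑ i ∈ s, a i ⊓ ∑ j ∈ t, b j :=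
        sum_inf_le_sum_inf s ha (sum_nonneg hb)
    _ ≤ ∑ i ∈ s, ∑ j ∈ t, b j ⊓ a i := by
        gcongr with i hi
        rw [inf_comm]
        exact sum_inf_le_sum_inf t hb (ha i hi)
    _ = 0 := sum_eq_zero fun i hi => sum_eq_zero fun j hj => by rw [inf_comm, hab i hi j hj]

theorem le_sum_inf_of_forall_le_sum_ite {ι : Type*} [DecidableEq ι] (s : Finset ι)
    (p q : ι → F) {X : F} (h : ∀ σ : ι → Bool, X ≤ ∑ a ∈ s, if σ a then p a else q a) :
    X ≤ ∑ a ∈ s, p a ⊓ q a := by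
  induction s using Finset.induction_on generalizing X with
  | empty => simpa using h fun _ => true
  | insert c t hc ih =>
    have hsplit : ∀ (b : Bool) (σ : ι → Bool),
        X ≤ (if b then p c else q c) + ∑ a ∈ t, if σ a then p a else q a := by
      intro b σ
      convert h (Function.update σ c b) using 1
      rw [sum_insert hc, Function.update_self]
      congr 1
      refine sum_congr rfl fun a ha => ?_
      rw [Function.update_of_ne (ne_of_mem_of_not_mem ha hc)]
    rw [sum_insert hc, inf_add]
    refine le_inf ?_ ?_ <;> rw [← sub_le_iff_le_add'] <;> refine ih fun σ => ?_ <;>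
      rw [sub_le_iff_le_add']
    · exact hsplit true σ
    · exact hsplit false σ

end LatticeOrderedGroup

section ClosedCone

variable {F : Type*} [Lattice F] [AddCommGroup F] [IsOrderedAddMonoid F] [Module ℝ F]

theorem dyadic_smul_nonneg {v : F} (hv : 0 ≤ v) (k m : ℕ) : 0 ≤ ((k : ℝ) / 2 ^ m) • v := by
  induction m with
  | zero => simpa [Nat.cast_smul_eq_nsmul] using nsmul_nonneg hv k
  | succ m ih =>
    refine nsmul_two_semiclosed ?_
    have halve : (2 : ℝ) * (k / 2 ^ (m + 1)) = k / 2 ^ m := by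
      rw [pow_succ]; field_simp
    rwa [← Nat.cast_smul_eq_nsmul ℝ, smul_smul, Nat.cast_ofNat, halve]

/-- Nothing ties the order of a lattice-ordered real vector space to its scalars; a closed positive
cone does, through halving (`nsmul_two_semiclosed`) and the density of the dyadic rationals. -/
instance OrderClosedTopology.posSMulMono_real [TopologicalSpace F] [OrderClosedTopology F]
    [ContinuousSMul ℝ F] : PosSMulMono ℝ F := by
  refine PosSMulMono.of_smul_nonneg fun r hr v hv => ?_
  have hlim : Filter.Tendsto (fun m : ℕ => (⌊r * 2 ^ m⌋₊ : ℝ) / 2 ^ m) Filter.atTop (nhds r) :=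
    (tendsto_nat_floor_mul_div_atTop hr).comp (tendsto_pow_atTop_atTop_of_one_lt one_lt_two)
  exact (isClosed_le continuous_const (continuous_id.smul continuous_const)).mem_of_tendsto hlim
    (Filter.Eventually.of_forall fun m => dyadic_smul_nonneg hv _ m)

end ClosedCone

section OrderedModule

variable {F : Type*} [Lattice F] [AddCommGroup F] [Module ℝ F] [PosSMulMono ℝ F]

theorem smul_inf_of_nonneg {c : ℝ} (hc : 0 ≤ c) (a b : F) : c • (a ⊓ b) = c • a ⊓ c • b := by
  rcases hc.eq_or_lt with rfl | hc
  · simp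
  · exact (OrderIso.smulRight hc).map_inf a b

variable [IsOrderedAddMonoid F]

theorem smul_inf_smul_eq_zero {a b : ℝ} (ha : 0 ≤ a) (hb : 0 ≤ b) {v w : F} (hv : 0 ≤ v)
    (hw : 0 ≤ w) (hvw : v ⊓ w = 0) : a • v ⊓ b • w = 0 := by
  refine le_antisymm ?_ (le_inf (smul_nonneg ha hv) (smul_nonneg hb hw))
  calc a • v ⊓ b • w ≤ (a + b) • v ⊓ (a + b) • w := by
        gcongr <;> linarith
    _ = 0 := by rw [← smul_inf_of_nonneg (by positivity), hvw, smul_zero]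

theorem abs_smul_le_of_nonneg (r : ℝ) {v : F} (hv : 0 ≤ v) : |r • v| ≤ |r| • v := by
  refine abs_le'.2 ⟨smul_le_smul_of_nonneg_right (le_abs_self r) hv, ?_⟩
  rw [← neg_smul]
  exact smul_le_smul_of_nonneg_right (neg_le_abs r) hv

theorem abs_sum_smul_le {ι : Type*} (s : Finset ι) (x : ι → ℝ) {v : ι → F}
    (hv : ∀ i, 0 ≤ v i) : |∑ i ∈ s, x i • v i| ≤ ∑ i ∈ s, |x i| • v i :=
  (Finset.le_sum_of_subadditive _ abs_zero.le abs_add_le s _).trans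
    (sum_le_sum fun i _ => abs_smul_le_of_nonneg (x i) (hv i))

end OrderedModule

section LinearCombination

variable {ι F : Type*} [Fintype ι] [NormedAddCommGroup F] [NormedSpace ℝ F]

noncomputable def linearCombinationCLM (v : ι → F) : (ι → ℝ) →L[ℝ] F :=
  LinearMap.toContinuousLinearMap (Fintype.linearCombination ℝ v)

@[simp]
theorem linearCombinationCLM_apply (v : ι → F) (x : ι → ℝ) :
    linearCombinationCLM v x = ∑ i, x i • v i :=
  Fintype.linearCombination_apply ℝ v x

theorem linearCombinationCLM_sub (v w : ι → F) :
    linearCombinationCLM v - linearCombinationCLM w = linearCombinationCLM (v - w) := by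
  ext x
  simp [smul_sub]

theorem eq_linearCombinationCLM [DecidableEq ι] (T : (ι → ℝ) →L[ℝ] F) :
    T = linearCombinationCLM fun i => T (Pi.single i 1) := by
  ext x
  conv_lhs => rw [← Finset.univ_sum_single x]
  rw [map_sum, linearCombinationCLM_apply]
  refine sum_congr rfl fun i _ => ?_
  rw [← map_smul, ← Pi.single_smul', smul_eq_mul, mul_one]

variable [Lattice F] [IsOrderedAddMonoid F] [HasSolidNorm F]

theorem linearCombinationCLM_nonneg {v : ι → F} (hv : ∀ i, 0 ≤ v i) {x : ι → ℝ} (hx : 0 ≤ x) :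
    0 ≤ linearCombinationCLM v x := by
  rw [linearCombinationCLM_apply]
  exact sum_nonneg fun i _ => smul_nonneg (hx i) (hv i)

theorem norm_linearCombinationCLM_le {v : ι → F} (hv : ∀ i, 0 ≤ v i) :
    ‖linearCombinationCLM v‖ ≤ ‖∑ i, v i‖ := by
  refine ContinuousLinearMap.opNorm_le_bound _ (norm_nonneg _) fun x => ?_
  have hsum : 0 ≤ ∑ i, v i := sum_nonneg fun i _ => hv i
  have habs : |linearCombinationCLM v x| ≤ |‖x‖ • ∑ i, v i| := by
    rw [abs_of_nonneg (smul_nonneg (norm_nonneg x) hsum), linearCombinationCLM_apply, smul_sum]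
    refine (abs_sum_smul_le _ x hv).trans (sum_le_sum fun i _ => ?_)
    exact smul_le_smul_of_nonneg_right (norm_le_pi_norm x i) (hv i)
  rw [mul_comm, ← norm_smul_of_nonneg (norm_nonneg x)]
  exact norm_le_norm_of_abs_le_abs habs

theorem linearCombinationCLM_abs_inf_abs_eq_zero {v : ι → F} (hv : ∀ i, 0 ≤ v i)
    (hdisj : Pairwise fun i j => v i ⊓ v j = 0) {x y : ι → ℝ} (hxy : |x| ⊓ |y| = 0) :
    |linearCombinationCLM v x| ⊓ |linearCombinationCLM v y| = 0 := by
  refine le_antisymm ?_ (le_inf (abs_nonneg _) (abs_nonneg _))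
  have hxy' : ∀ i, |x i| ⊓ |y i| = 0 := fun i => congrFun hxy i
  calc |linearCombinationCLM v x| ⊓ |linearCombinationCLM v y|
      ≤ (∑ i, |x i| • v i) ⊓ ∑ j, |y j| • v j := by
        simp only [linearCombinationCLM_apply]
        exact inf_le_inf (abs_sum_smul_le _ x hv) (abs_sum_smul_le _ y hv)
    _ = 0 := by
      refine sum_inf_sum_eq_zero (fun i _ => smul_nonneg (abs_nonneg _) (hv i))
        (fun j _ => smul_nonneg (abs_nonneg _) (hv j)) fun i _ j _ => ?_
      rcases eq_or_ne i j with rfl | hij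
      · rcases le_total |x i| |y i| with hle | hle
        · rw [← inf_eq_left.2 hle, hxy' i, zero_smul]
          exact inf_eq_left.2 (smul_nonneg (abs_nonneg _) (hv i))
        · rw [← inf_eq_right.2 hle, hxy' i, zero_smul]
          exact inf_eq_right.2 (smul_nonneg (abs_nonneg _) (hv i))
      · exact smul_inf_smul_eq_zero (abs_nonneg _) (abs_nonneg _) (hv i) (hv j) (hdisj hij)

end LinearCombination

section Overlap

variable {ι F : Type*} [Fintype ι] [Lattice F] [AddCommGroup F] {f : ι → F}

def overlap (f : ι → F) (i : ι) : F := f i ⊓ (∑ j, f j - f i)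

theorem overlap_le (f : ι → F) (i : ι) : overlap f i ≤ f i := inf_le_left

theorem overlap_le_sum_sub (f : ι → F) (i : ι) : overlap f i ≤ ∑ j, f j - f i := inf_le_right

variable [IsOrderedAddMonoid F]

theorem le_sum_sub_of_ne [DecidableEq ι] (hf : ∀ i, 0 ≤ f i) {i j : ι} (hij : i ≠ j) :
    f j ≤ ∑ k, f k - f i := by
  rw [← add_sum_erase _ _ (mem_univ i), add_sub_cancel_left]
  exact single_le_sum (fun k _ => hf k) (mem_erase.2 ⟨hij.symm, mem_univ j⟩)

theorem overlap_nonneg (hf : ∀ i, 0 ≤ f i) (i : ι) : 0 ≤ overlap f i :=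
  le_inf (hf i) (sub_nonneg.2 (single_le_sum (fun k _ => hf k) (mem_univ i)))

theorem pairwise_sub_overlap_inf_eq_zero (hf : ∀ i, 0 ≤ f i) :
    Pairwise fun i j => (f i - overlap f i) ⊓ (f j - overlap f j) = 0 := by
  classical
  have hle : ∀ i j, i ≠ j → f i - overlap f i ≤ (f i - f j)⁺ := by
    intro i j hij
    rw [overlap, sub_inf, sub_self, posPart_def, sup_comm]
    exact sup_le_sup_right (sub_le_sub_left (le_sum_sub_of_ne hf hij) _) 0
  intro i j hij
  refine le_antisymm ?_ (le_inf (sub_nonneg.2 (overlap_le f i)) (sub_nonneg.2 (overlap_le f j)))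
  calc (f i - overlap f i) ⊓ (f j - overlap f j) ≤ (f i - f j)⁺ ⊓ (f i - f j)⁻ := by
        rw [← posPart_neg, neg_sub]
        exact inf_le_inf (hle i j hij) (hle j i hij.symm)
    _ = 0 := posPart_inf_negPart_eq_zero _

end Overlap

section Averaging

variable {ι : Type*} [Fintype ι] [DecidableEq ι]

theorem two_mul_card_separating {j j' : ι} (h : j ≠ j') :
    2 * #{A : Finset ι | ¬(j ∈ A ↔ j' ∈ A)} = 2 ^ Fintype.card ι := by
  have hswap : #{A : Finset ι | ¬(j ∈ A ↔ j' ∈ A)} = #{A : Finset ι | j ∈ A ↔ j' ∈ A} := by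
    refine card_nbij' (· ∆ {j}) (· ∆ {j}) ?_ ?_ (fun A _ => symmDiff_symmDiff_cancel_right _ _)
      (fun A _ => symmDiff_symmDiff_cancel_right _ _) <;>
    · intro A
      simp only [coe_filter, mem_univ, true_and, Set.mem_ofPred_eq, mem_symmDiff, mem_singleton]
      tauto
  have htotal := card_filter_add_card_filter_not
    (s := (univ : Finset (Finset ι))) (p := fun A => j ∈ A ↔ j' ∈ A)
  rw [card_univ, Fintype.card_finset] at htotal
  omega

theorem sum_sum_mem_eq_sum_card_nsmul {κ M : Type*} [Fintype κ] [AddCommMonoid M]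
    (C : κ → Finset ι) (f : ι → M) :
    ∑ a, ∑ j ∈ C a, f j = ∑ j, #{a | j ∈ C a} • f j := by
  rw [sum_comm' (t' := univ) (s' := fun j => {a | j ∈ C a}) (by simp)]
  simp only [sum_const]

variable {F : Type*} [Lattice F] [AddCommGroup F] [IsOrderedAddMonoid F] {f : ι → F}

theorem nsmul_sum_overlap_le (hf : ∀ i, 0 ≤ f i) (c : ι → ℕ) {M : ℕ}
    (hc : ∀ i j, i ≠ j → M ≤ 2 * (c i + c j)) :
    M • ∑ i, overlap f i ≤ ∑ i, (8 * c i) • f i := by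
  cases isEmpty_or_nonempty ι
  · simp
  obtain ⟨j₀, hj₀⟩ := Finite.exists_min c
  have hc₄ : ∀ i ∈ univ.erase j₀, 2 * M ≤ 8 * c i := fun i hi => by
    have := hc i j₀ (ne_of_mem_erase hi)
    have := hj₀ i
    omega
  calc M • ∑ i, overlap f i
      = M • overlap f j₀ + ∑ i ∈ univ.erase j₀, M • overlap f i := by
        rw [smul_sum, ← add_sum_erase _ _ (mem_univ j₀)]
    _ ≤ M • ∑ i ∈ univ.erase j₀, f i + ∑ i ∈ univ.erase j₀, M • f i := by
        rw [sum_erase_eq_sub (f := f) (mem_univ j₀)]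
        gcongr with i
        exacts [overlap_le_sum_sub f j₀, overlap_le f i]
    _ = ∑ i ∈ univ.erase j₀, (2 * M) • f i := by
        rw [smul_sum, ← sum_add_distrib]
        simp only [two_mul, add_nsmul]
    _ ≤ ∑ i ∈ univ.erase j₀, (8 * c i) • f i :=
        sum_le_sum fun i hi => nsmul_le_nsmul_left (hf i) (hc₄ i hi)
    _ ≤ ∑ i, (8 * c i) • f i :=
        sum_le_sum_of_subset_of_nonneg (subset_univ _) fun i _ _ => nsmul_nonneg (hf i) _

theorem nsmul_sum_overlap_le_sum_sum (hf : ∀ i, 0 ≤ f i) (C : Finset ι → Finset ι)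
    (hC : ∀ A, C A = A ∨ C A = Aᶜ) :
    2 ^ Fintype.card ι • ∑ i, overlap f i ≤ 8 • ∑ A, ∑ j ∈ C A, f j := by
  rw [sum_sum_mem_eq_sum_card_nsmul, smul_sum (r := 8)]
  simp only [smul_smul]
  refine nsmul_sum_overlap_le hf _ fun j j' hjj' => ?_
  rw [← two_mul_card_separating hjj']
  gcongr
  refine (card_le_card fun A hA => ?_).trans (card_union_le _ _)
  simp only [mem_filter, mem_univ, true_and, mem_union] at hA ⊢
  rcases hC A with hCA | hCA <;> simp only [hCA, mem_compl] <;> tauto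

end Averaging

section NormEstimate

variable {ι F : Type*} [Fintype ι] [DecidableEq ι] [NormedAddCommGroup F] [Lattice F]
  [IsOrderedAddMonoid F] [HasSolidNorm F] [NormedSpace ℝ F] {f : ι → F}

theorem norm_sum_overlap_le (hf : ∀ i, 0 ≤ f i) {δ : ℝ}
    (hδ : ∀ A : Finset ι, ‖(∑ i ∈ A, f i) ⊓ ∑ i ∈ Aᶜ, f i‖ ≤ δ) :
    ‖∑ i, overlap f i‖ ≤ 8 * δ := by
  set P : Finset ι → F := fun A => ∑ i ∈ A, f i
  have h8 : ∀ A, (8 : ℕ) • P A ⊓ (8 : ℕ) • P Aᶜ = (8 : ℝ) • (P A ⊓ P Aᶜ) := fun A => by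
    rw [smul_inf_of_nonneg (by norm_num), ← Nat.cast_smul_eq_nsmul ℝ, ← Nat.cast_smul_eq_nsmul ℝ]
    norm_num
  have hle : 2 ^ Fintype.card ι • ∑ i, overlap f i ≤ ∑ A, (8 : ℝ) • (P A ⊓ P Aᶜ) := by
    simp only [← h8]
    refine le_sum_inf_of_forall_le_sum_ite _ _ _ fun σ => ?_
    convert nsmul_sum_overlap_le_sum_sum hf (fun A => if σ A then A else Aᶜ)
      (fun A => by cases σ A <;> simp) using 1
    rw [smul_sum]
    exact sum_congr rfl fun A _ => by cases σ A <;> rfl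
  have hnonneg : 0 ≤ 2 ^ Fintype.card ι • ∑ i, overlap f i :=
    nsmul_nonneg (sum_nonneg fun i _ => overlap_nonneg hf i) _
  have hnorm : (2 : ℝ) ^ Fintype.card ι * ‖∑ i, overlap f i‖ ≤ 2 ^ Fintype.card ι * (8 * δ) :=
    calc (2 : ℝ) ^ Fintype.card ι * ‖∑ i, overlap f i‖
        = ‖2 ^ Fintype.card ι • ∑ i, overlap f i‖ := by
          rw [RCLike.norm_nsmul ℝ, nsmul_eq_mul]; push_cast; rfl
      _ ≤ ‖∑ A, (8 : ℝ) • (P A ⊓ P Aᶜ)‖ := by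
          refine norm_le_norm_of_abs_le_abs ?_
          rw [abs_of_nonneg hnonneg, abs_of_nonneg (hnonneg.trans hle)]
          exact hle
      _ ≤ ∑ _A : Finset ι, 8 * δ := by
          refine (norm_sum_le _ _).trans (sum_le_sum fun A _ => ?_)
          rw [norm_smul, Real.norm_eq_abs, abs_of_pos (by norm_num)]
          gcongr
          exact hδ A
      _ = 2 ^ Fintype.card ι * (8 * δ) := by
          rw [sum_const, card_univ, Fintype.card_finset, nsmul_eq_mul]
          push_cast
          ring
  exact le_of_mul_le_mul_left hnorm (by positivity)

end NormEstimate

theorem norm_sum_single_inf_sum_compl_le {ι F : Type*} [Fintype ι] [DecidableEq ι]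
    [NormedAddCommGroup F] [Lattice F] [IsOrderedAddMonoid F] [NormedSpace ℝ F] {ε : ℝ}
    (hε : 0 ≤ ε) (T : (ι → ℝ) →L[ℝ] F) (hpos : ∀ x : ι → ℝ, 0 ≤ x → 0 ≤ T x)
    (hDP : ∀ x y : ι → ℝ, |x| ⊓ |y| = 0 → ‖|T x| ⊓ |T y|‖ ≤ ε * max ‖x‖ ‖y‖) (A : Finset ι) :
    ‖(∑ i ∈ A, T (Pi.single i 1)) ⊓ ∑ i ∈ Aᶜ, T (Pi.single i 1)‖ ≤ ε := by
  set x : Finset ι → ι → ℝ := fun B => ∑ i ∈ B, Pi.single i 1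
  have hx : ∀ B j, x B j = if j ∈ B then 1 else 0 := fun B j => by
    simp [x, Finset.sum_apply, Pi.single_apply]
  have hx_nonneg : ∀ B, 0 ≤ x B := fun B j => by rw [hx]; split_ifs <;> norm_num
  have hx_norm : ∀ B, ‖x B‖ ≤ 1 := fun B =>
    (pi_norm_le_iff_of_nonneg zero_le_one).2 fun j => by rw [hx]; split_ifs <;> norm_num
  have hdisj : |x A| ⊓ |x Aᶜ| = 0 := funext fun j => by
    simp only [Pi.inf_apply, Pi.abs_apply, hx, mem_compl]
    split_ifs <;> norm_num
  have h := hDP (x A) (x Aᶜ) hdisj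
  rw [abs_of_nonneg (hpos _ (hx_nonneg A)), abs_of_nonneg (hpos _ (hx_nonneg Aᶜ))] at h
  simp only [x, map_sum] at h
  exact h.trans (mul_le_of_le_one_right hε (max_le (hx_norm A) (hx_norm Aᶜ)))

theorem stmt6_general (F : Type*)
    [NormedAddCommGroup F] [Lattice F] [IsOrderedAddMonoid F] [HasSolidNorm F]
    [NormedSpace ℝ F]
    (n : ℕ) (ε : ℝ) (hε : 0 ≤ ε) (T : (Fin n → ℝ) →L[ℝ] F)
    (hpos : ∀ x : Fin n → ℝ, 0 ≤ x → 0 ≤ T x)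
    (hDP : ∀ x y : Fin n → ℝ, |x| ⊓ |y| = 0 → ‖|T x| ⊓ |T y|‖ ≤ ε * max ‖x‖ ‖y‖) :
    ∃ S : (Fin n → ℝ) →L[ℝ] F,
      (∀ x y : Fin n → ℝ, |x| ⊓ |y| = 0 → |S x| ⊓ |S y| = 0) ∧
      (∀ x : Fin n → ℝ, 0 ≤ x → 0 ≤ S x) ∧
      (∀ x : Fin n → ℝ, 0 ≤ x → S x ≤ T x) ∧
      ‖T - S‖ ≤ 256 * ε := by
  set f : Fin n → F := fun i => T (Pi.single i 1)
  have hf : ∀ i, 0 ≤ f i := fun i => hpos _ (Pi.single_nonneg.2 zero_le_one)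
  have hg : ∀ i, 0 ≤ (f - overlap f) i := fun i => sub_nonneg.2 (overlap_le f i)
  have hTS : T - linearCombinationCLM (f - overlap f) = linearCombinationCLM (overlap f) := by
    rw [eq_linearCombinationCLM T, linearCombinationCLM_sub, sub_sub_cancel]
  refine ⟨linearCombinationCLM (f - overlap f),
    fun x y => linearCombinationCLM_abs_inf_abs_eq_zero hg (pairwise_sub_overlap_inf_eq_zero hf),
    fun x => linearCombinationCLM_nonneg hg, fun x hx => ?_, ?_⟩
  · rw [← sub_nonneg, ← sub_apply, hTS]
    exact linearCombinationCLM_nonneg (overlap_nonneg hf) hx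
  · calc ‖T - linearCombinationCLM (f - overlap f)‖ ≤ ‖∑ i, overlap f i‖ := by
          rw [hTS]; exact norm_linearCombinationCLM_le (overlap_nonneg hf)
      _ ≤ 8 * ε := norm_sum_overlap_le hf (norm_sum_single_inf_sum_compl_le hε T hpos hDP)
      _ ≤ 256 * ε := by linarith

/-- A positive `ε`-disjointness preserving operator `T : ℓ_∞^n → F` admits a
disjointness preserving operator `S` with `0 ≤ S ≤ T` and `‖T - S‖ ≤ 256 ε`.  Here `ℓ_∞^n` is
`Fin n → ℝ` with the sup norm and coordinatewise order. -/
theorem stmt6 (F : Type*)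
    [NormedAddCommGroup F] [Lattice F] [IsOrderedAddMonoid F] [HasSolidNorm F]
    [NormedSpace ℝ F] [CompleteSpace F]
    (n : ℕ) (ε : ℝ) (hε : 0 ≤ ε) (T : (Fin n → ℝ) →L[ℝ] F)
    (hpos : ∀ x : Fin n → ℝ, 0 ≤ x → 0 ≤ T x)
    (hDP : ∀ x y : Fin n → ℝ, |x| ⊓ |y| = 0 → ‖|T x| ⊓ |T y|‖ ≤ ε * max ‖x‖ ‖y‖) :
    ∃ S : (Fin n → ℝ) →L[ℝ] F,
      (∀ x y : Fin n → ℝ, |x| ⊓ |y| = 0 → |S x| ⊓ |S y| = 0) ∧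
      (∀ x : Fin n → ℝ, 0 ≤ x → 0 ≤ S x) ∧
      (∀ x : Fin n → ℝ, 0 ≤ x → S x ≤ T x) ∧
      ‖T - S‖ ≤ 256 * ε :=
  stmt6_general F n ε hε T hpos hDP
end

section
/- Let K be a compact Hausdorff space, ε > 0, and T : c₀ → C(K) a bounded linear operator which is ε-disjointness preserving. Then there exists a disjointness preserving linear operator S : c₀ → C(K) such that ‖S‖ ≤ ‖T‖ and ‖T − S‖ ≤ 257·ε. If moreover T is positive, then S can be chosen with 0 ≤ S ≤ T. -/
/-!
Write `gₙ = T eₙ`. Applied to `eₘ, eₙ`, the ε-disjointness of `T` says that `|gₘ|` and `|gₙ|` never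
both exceed `ε` at the same point, so the soft-thresholded columns `hₙ = sign gₙ · (|gₙ| - ε)⁺`
have pairwise disjoint supports. Hence `S x = ∑ xₙ hₙ` is disjointness preserving, with
`‖S‖ ≤ ‖T‖`, and `0 ≤ S ≤ T` when `T` is positive.

At a point `t` where some `hₙ t ≠ 0`, the part of `x` off `n` is disjoint from `‖x‖ eₙ`, whose
image at `t` exceeds `ε ‖x‖`; so that part contributes at most `ε ‖x‖`, and
`|(T x - S x) t| ≤ 2 ε ‖x‖`. Where all `|gₙ t| ≤ ε`, the values at `t` of the images of the
truncations of `x` go from `0` to `(T x) t` in steps of at most `ε ‖x‖`; at the first one exceeding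
`ε ‖x‖`, disjointness from the remaining tail gives `|(T x) t| ≤ 3 ε ‖x‖`. So `‖T - S‖ ≤ 3 ε`.
-/

open ZeroAtInfty Filter Topology Function

/-- `softThreshold ε a = sign a · max (|a| - ε) 0` for `0 ≤ ε`. -/
noncomputable def softThreshold (ε a : ℝ) : ℝ := a - max (-ε) (min a ε)

namespace softThreshold

theorem continuous (ε : ℝ) : Continuous (softThreshold ε) := by
  unfold softThreshold; fun_prop

variable {ε : ℝ}

theorem abs_sub_le (hε : 0 ≤ ε) (a : ℝ) : |a - softThreshold ε a| ≤ ε := by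
  simp only [softThreshold, sub_sub_cancel, abs_le]
  constructor <;> grind

theorem eq_zero_iff (hε : 0 ≤ ε) {a : ℝ} : softThreshold ε a = 0 ↔ |a| ≤ ε := by
  simp only [softThreshold, abs_le]
  grind

theorem abs_le_abs (hε : 0 ≤ ε) (a : ℝ) : |softThreshold ε a| ≤ |a| := by
  simp only [softThreshold, abs_le]
  grind

theorem nonneg (hε : 0 ≤ ε) {a : ℝ} (ha : 0 ≤ a) : 0 ≤ softThreshold ε a := by
  unfold softThreshold; grind

theorem le_self {a : ℝ} (ha : 0 ≤ a) : softThreshold ε a ≤ a := by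
  unfold softThreshold; grind

end softThreshold

namespace ZeroAtInftyContinuousMap

variable {α : Type*} [TopologicalSpace α]

theorem norm_le_iff_forall_abs_le (x : C₀(α, ℝ)) {C : ℝ} (hC : 0 ≤ C) :
    ‖x‖ ≤ C ↔ ∀ a, |x a| ≤ C := by
  rw [← norm_toBCF_eq_norm]
  exact BoundedContinuousFunction.norm_le hC

theorem abs_apply_le_norm (x : C₀(α, ℝ)) (a : α) : |x a| ≤ ‖x‖ := by
  rw [← norm_toBCF_eq_norm]
  exact BoundedContinuousFunction.norm_coe_le_norm x.toBCF a

variable [DiscreteTopology α]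

noncomputable def single [DecidableEq α] (a : α) : C₀(α, ℝ) where
  toFun := Pi.single a 1
  continuous_toFun := continuous_of_discreteTopology
  zero_at_infty' := tendsto_const_nhds.congr' <| by
    filter_upwards [isCompact_singleton.compl_mem_cocompact] with b hb
    rw [Pi.single_eq_of_ne hb]

@[simp] theorem single_apply [DecidableEq α] (a b : α) : single a b = if b = a then 1 else 0 :=
  Pi.single_apply ..

theorem norm_single_le [DecidableEq α] (a : α) : ‖single a‖ ≤ 1 :=
  (norm_le_iff_forall_abs_le _ zero_le_one).2 fun b => by by_cases h : b = a <;> simp [h]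

open Classical in
noncomputable def indicator (x : C₀(α, ℝ)) (s : Set α) : C₀(α, ℝ) where
  toFun := s.indicator x
  continuous_toFun := continuous_of_discreteTopology
  zero_at_infty' :=
    squeeze_zero_norm (norm_indicator_le_norm_self x) (by simpa using x.zero_at_infty'.norm)

theorem indicator_apply (x : C₀(α, ℝ)) (s : Set α) (a : α) :
    x.indicator s a = s.indicator x a := rfl

theorem norm_indicator_le (x : C₀(α, ℝ)) (s : Set α) : ‖x.indicator s‖ ≤ ‖x‖ :=
  (norm_le_iff_forall_abs_le _ (norm_nonneg x)).2 fun a =>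
    (norm_indicator_le_norm_self x a).trans (abs_apply_le_norm x a)

theorem min_abs_indicator_compl (x y : C₀(α, ℝ)) (s : Set α) (a : α) :
    min |x.indicator s a| |y.indicator sᶜ a| = 0 := by
  by_cases h : a ∈ s <;> simp [indicator_apply, h]

theorem sub_indicator (x : C₀(α, ℝ)) (s : Set α) : x - x.indicator s = x.indicator sᶜ := by
  ext a; by_cases h : a ∈ s <;> simp [indicator_apply, h]

theorem indicator_compl_singleton_add [DecidableEq α] (x : C₀(α, ℝ)) (a : α) :
    x.indicator {a}ᶜ + x a • single a = x := by
  ext b; by_cases h : b = a <;> simp [indicator_apply, h]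

theorem indicator_Iio_zero (x : C₀(ℕ, ℝ)) : x.indicator (Set.Iio 0) = 0 := by
  ext n; simp [indicator_apply]

theorem indicator_Iio_succ (x : C₀(ℕ, ℝ)) (N : ℕ) :
    x.indicator (Set.Iio (N + 1)) = x.indicator (Set.Iio N) + x N • single N := by
  ext n
  rcases lt_trichotomy n N with h | rfl | h
  · simp [indicator_apply, h, h.trans (Nat.lt_succ_self N), h.ne]
  · simp [indicator_apply]
  · simp [indicator_apply, h.ne', not_lt.2 h.le, not_lt.2 (Nat.succ_le_of_lt h)]

theorem tendsto_indicator_Iio (x : C₀(ℕ, ℝ)) :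
    Tendsto (fun N => x.indicator (Set.Iio N)) atTop (𝓝 x) := by
  have hx : Tendsto x atTop (𝓝 0) := by simpa [cocompact_eq_atTop] using x.zero_at_infty'
  refine Metric.tendsto_atTop.2 fun δ hδ => ?_
  obtain ⟨N₀, hN₀⟩ := eventually_atTop.1 (Metric.tendsto_nhds.1 hx (δ / 2) (half_pos hδ))
  refine ⟨N₀, fun N hN => ?_⟩
  rw [dist_comm, dist_eq_norm, sub_indicator]
  refine lt_of_le_of_lt ((norm_le_iff_forall_abs_le _ (half_pos hδ).le).2 fun m => ?_)
    (half_lt_self hδ)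
  by_cases hm : m < N
  · simpa [indicator_apply, hm] using (half_pos hδ).le
  · have hNm : N ≤ m := not_lt.1 hm
    simpa [indicator_apply, Set.indicator_apply, hNm] using (hN₀ m (hN.trans hNm)).le

end ZeroAtInftyContinuousMap

theorem ContinuousMap.abs_apply_le_norm {α : Type*} [TopologicalSpace α] [CompactSpace α]
    (f : C(α, ℝ)) (a : α) : |f a| ≤ ‖f‖ :=
  f.norm_coe_le_norm a

section DisjointSeries

variable {K : Type*} [TopologicalSpace K] {h : ℕ → C(K, ℝ)}

theorem exists_forall_ne_apply_eq_zero
    (hh : Pairwise (Disjoint on fun n => support (h n))) (t : K) :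
    ∃ n, ∀ m ≠ n, h m t = 0 := by
  by_cases H : ∃ n, h n t ≠ 0
  · obtain ⟨n, hn⟩ := H
    exact ⟨n, fun m hm => not_not.1 fun hm' => Set.disjoint_left.1 (hh hm) hm' hn⟩
  · push Not at H
    exact ⟨0, fun m _ => H m⟩

theorem tsum_smul_apply_of_forall_ne {c : ℕ → ℝ} (hsum : Summable fun n => c n • h n) {t : K}
    {n : ℕ} (hn : ∀ m ≠ n, h m t = 0) : (∑' m, c m • h m) t = c n * h n t := by
  rw [← ContinuousMap.evalCLM_apply ℝ t, (ContinuousMap.evalCLM ℝ t).map_tsum hsum,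
    tsum_eq_single n fun m hm => by simp [hn m hm]]
  simp

variable [CompactSpace K] {C : ℝ}

theorem norm_sum_smul_le (hh : Pairwise (Disjoint on fun n => support (h n)))
    (hC : ∀ n, ‖h n‖ ≤ C) {c : ℕ → ℝ} {s : Finset ℕ} {δ : ℝ} (hδ : 0 ≤ δ)
    (hc : ∀ n ∈ s, |c n| ≤ δ) : ‖∑ n ∈ s, c n • h n‖ ≤ δ * C := by
  have hC0 : 0 ≤ C := (norm_nonneg _).trans (hC 0)
  refine (ContinuousMap.norm_le _ (mul_nonneg hδ hC0)).2 fun t => ?_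
  obtain ⟨n, hn⟩ := exists_forall_ne_apply_eq_zero hh t
  have hsum : (∑ m ∈ s, c m • h m) t = ∑ m ∈ s, c m * h m t := by simp
  rw [hsum, Real.norm_eq_abs]
  by_cases hns : n ∈ s
  · rw [Finset.sum_eq_single_of_mem n hns fun m _ hm => by rw [hn m hm, mul_zero], abs_mul]
    exact mul_le_mul (hc n hns) (((h n).abs_apply_le_norm t).trans (hC n)) (abs_nonneg _) hδ
  · rw [Finset.sum_eq_zero fun m hm => by rw [hn m (ne_of_mem_of_not_mem hm hns), mul_zero],
      abs_zero]
    exact mul_nonneg hδ hC0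

theorem summable_smul_of_pairwise_disjoint_support
    (hh : Pairwise (Disjoint on fun n => support (h n))) (hC : ∀ n, ‖h n‖ ≤ C)
    (x : C₀(ℕ, ℝ)) : Summable fun n => x n • h n := by
  have hx : Tendsto x atTop (𝓝 0) := by simpa [cocompact_eq_atTop] using x.zero_at_infty'
  refine summable_iff_vanishing_norm.2 fun r hr => ?_
  obtain ⟨N, hN⟩ := eventually_atTop.1
    (Metric.tendsto_nhds.1 hx (r / (|C| + 1)) (by positivity))
  refine ⟨Finset.range N, fun s hs => ?_⟩
  refine (norm_sum_smul_le hh hC (δ := r / (|C| + 1)) (by positivity) fun n hn => ?_).trans_lt ?_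
  · have hNn : N ≤ n := not_lt.1 fun hn' => Finset.disjoint_left.1 hs hn (Finset.mem_range.2 hn')
    simpa using (hN n hNn).le
  · rw [div_mul_eq_mul_div, div_lt_iff₀ (by positivity)]
    nlinarith [le_abs_self C]

theorem norm_tsum_smul_le (hh : Pairwise (Disjoint on fun n => support (h n)))
    (hC : ∀ n, ‖h n‖ ≤ C) (x : C₀(ℕ, ℝ)) : ‖∑' n, x n • h n‖ ≤ C * ‖x‖ := by
  have hC0 : 0 ≤ C := (norm_nonneg _).trans (hC 0)
  refine (ContinuousMap.norm_le _ (by positivity)).2 fun t => ?_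
  obtain ⟨n, hn⟩ := exists_forall_ne_apply_eq_zero hh t
  rw [tsum_smul_apply_of_forall_ne (summable_smul_of_pairwise_disjoint_support hh hC x) hn,
    Real.norm_eq_abs, abs_mul, mul_comm C]
  exact mul_le_mul (x.abs_apply_le_norm n) (((h n).abs_apply_le_norm t).trans (hC n))
    (abs_nonneg _) (norm_nonneg x)

noncomputable def disjointSeriesCLM (hh : Pairwise (Disjoint on fun n => support (h n)))
    (hC : ∀ n, ‖h n‖ ≤ C) : C₀(ℕ, ℝ) →L[ℝ] C(K, ℝ) :=
  LinearMap.mkContinuous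
    { toFun := fun x => ∑' n, x n • h n
      map_add' := fun x y => by
        simp only [ZeroAtInftyContinuousMap.add_apply, add_smul]
        exact (summable_smul_of_pairwise_disjoint_support hh hC x).tsum_add
          (summable_smul_of_pairwise_disjoint_support hh hC y)
      map_smul' := fun c x => by
        simp only [ZeroAtInftyContinuousMap.smul_apply, smul_eq_mul, mul_smul, RingHom.id_apply]
        exact (summable_smul_of_pairwise_disjoint_support hh hC x).tsum_const_smul c }
    C (norm_tsum_smul_le hh hC)

variable {hh : Pairwise (Disjoint on fun n => support (h n))} {hC : ∀ n, ‖h n‖ ≤ C}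

theorem disjointSeriesCLM_apply_of_forall_ne (x : C₀(ℕ, ℝ)) {t : K} {n : ℕ}
    (hn : ∀ m ≠ n, h m t = 0) : disjointSeriesCLM hh hC x t = x n * h n t :=
  tsum_smul_apply_of_forall_ne (summable_smul_of_pairwise_disjoint_support hh hC x) hn

theorem norm_disjointSeriesCLM_le : ‖disjointSeriesCLM hh hC‖ ≤ C :=
  LinearMap.mkContinuous_norm_le _ ((norm_nonneg _).trans (hC 0)) _

theorem disjointSeriesCLM_inf_eq_zero {x y : C₀(ℕ, ℝ)} (hxy : ∀ n, min |x n| |y n| = 0) :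
    |disjointSeriesCLM hh hC x| ⊓ |disjointSeriesCLM hh hC y| = 0 := by
  ext t
  obtain ⟨n, hn⟩ := exists_forall_ne_apply_eq_zero hh t
  simp only [ContinuousMap.inf_apply, ContinuousMap.abs_apply, ContinuousMap.zero_apply,
    disjointSeriesCLM_apply_of_forall_ne _ hn, abs_mul]
  rcases min_eq_iff.1 (hxy n) with ⟨hx, -⟩ | ⟨hy, -⟩
  · rw [hx, zero_mul]
    exact min_eq_left (by positivity)
  · rw [hy, zero_mul]
    exact min_eq_right (by positivity)

end DisjointSeries

theorem abs_le_three_mul_of_tendsto {f : ℕ → ℝ} {L δ : ℝ} (hf : Tendsto f atTop (𝓝 L))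
    (h0 : |f 0| ≤ δ) (hstep : ∀ N, |f (N + 1) - f N| ≤ δ)
    (hmin : ∀ N, min |f N| |L - f N| ≤ δ) : |L| ≤ 3 * δ := by
  have hδ : 0 ≤ δ := (abs_nonneg _).trans h0
  by_cases hex : ∃ N, δ < |f N|
  · classical
    obtain ⟨M, hM⟩ : ∃ M, Nat.find hex = M + 1 :=
      Nat.exists_eq_succ_of_ne_zero fun h => by simpa [h, h0.not_gt] using Nat.find_spec hex
    have hbig : δ < |f (M + 1)| := hM ▸ Nat.find_spec hex
    have hM : |f M| ≤ δ := not_lt.1 (Nat.find_min hex (by omega))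
    have hfar : |L - f (M + 1)| ≤ δ := by
      rcases min_le_iff.1 (hmin (M + 1)) with h | h
      · linarith
      · exact h
    linarith [abs_sub_abs_le_abs_sub L (f (M + 1)), abs_sub_abs_le_abs_sub (f (M + 1)) (f M),
      hstep M]
  · push Not at hex
    linarith [le_of_tendsto' hf.abs hex]

def IsEpsDisjointnessPreserving {K : Type*} [TopologicalSpace K] [CompactSpace K] (ε : ℝ)
    (T : C₀(ℕ, ℝ) →L[ℝ] C(K, ℝ)) : Prop :=
  ∀ x y : C₀(ℕ, ℝ), (∀ n, min |x n| |y n| = 0) → ‖|T x| ⊓ |T y|‖ ≤ ε * max ‖x‖ ‖y‖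

open ZeroAtInftyContinuousMap

section Columns

variable {K : Type*} [TopologicalSpace K] (T : C₀(ℕ, ℝ) →L[ℝ] C(K, ℝ))

theorem apply_eq_apply_indicator_add (x : C₀(ℕ, ℝ)) (n : ℕ) (t : K) :
    T x t = T (x.indicator {n}ᶜ) t + x n * T (single n) t := by
  conv_lhs => rw [← indicator_compl_singleton_add x n]
  simp

theorem mul_apply_single_le_apply (hpos : ∀ x : C₀(ℕ, ℝ), (∀ n, 0 ≤ x n) → 0 ≤ T x)
    {x : C₀(ℕ, ℝ)} (hx : ∀ n, 0 ≤ x n) (n : ℕ) (t : K) : x n * T (single n) t ≤ T x t := by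
  have hrest : 0 ≤ T (x.indicator {n}ᶜ) t :=
    hpos _ (fun m => by by_cases hm : m = n <;> simp [indicator_apply, hm, hx m]) t
  linarith [apply_eq_apply_indicator_add T x n t]

end Columns

namespace IsEpsDisjointnessPreserving

variable {K : Type*} [TopologicalSpace K] [CompactSpace K] {ε : ℝ} {T : C₀(ℕ, ℝ) →L[ℝ] C(K, ℝ)}

theorem min_abs_apply_le (hT : IsEpsDisjointnessPreserving ε T) {x y : C₀(ℕ, ℝ)}
    (hxy : ∀ n, min |x n| |y n| = 0) (t : K) : min |T x t| |T y t| ≤ ε * max ‖x‖ ‖y‖ :=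
  ((|T x| ⊓ |T y|).apply_le_norm t).trans (hT x y hxy)

theorem min_abs_apply_single_le (hT : IsEpsDisjointnessPreserving ε T) (hε : 0 ≤ ε) {m n : ℕ}
    (hmn : m ≠ n) (t : K) : min |T (single m) t| |T (single n) t| ≤ ε := by
  have hdisj : ∀ k, min |single m k| |single n k| = 0 := fun k => by
    by_cases hk : k = m <;> simp [hk, hmn]
  refine (hT.min_abs_apply_le hdisj t).trans (mul_le_of_le_one_right hε ?_)
  exact max_le (norm_single_le m) (norm_single_le n)

theorem abs_apply_sub_le_of_lt (hT : IsEpsDisjointnessPreserving ε T) (hε : 0 ≤ ε) {n : ℕ}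
    {t : K} (hn : ε < |T (single n) t|) (x : C₀(ℕ, ℝ)) :
    |T x t - x n * T (single n) t| ≤ ε * ‖x‖ := by
  rcases eq_or_ne x 0 with rfl | hx
  · simp
  rw [apply_eq_apply_indicator_add T x n t, add_sub_cancel_right]
  have hdisj : ∀ m, min |x.indicator {n}ᶜ m| |(‖x‖ • single n) m| = 0 := fun m => by
    by_cases hm : m = n <;> simp [indicator_apply, hm]
  have hnorm : max ‖x.indicator {n}ᶜ‖ ‖‖x‖ • single n‖ ≤ ‖x‖ := by
    refine max_le (norm_indicator_le x _) ?_
    rw [norm_smul, norm_norm]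
    exact mul_le_of_le_one_right (norm_nonneg x) (norm_single_le n)
  have hbig : ε * ‖x‖ < |T (‖x‖ • single n) t| := by
    rw [map_smul, ContinuousMap.smul_apply, smul_eq_mul, abs_mul, abs_norm, mul_comm]
    exact mul_lt_mul_of_pos_left hn (norm_pos_iff.2 hx)
  have hmin := (hT.min_abs_apply_le hdisj t).trans (mul_le_mul_of_nonneg_left hnorm hε)
  rcases min_le_iff.1 hmin with h | h
  · exact h
  · linarith

theorem abs_apply_le_of_forall_abs_apply_single_le (hT : IsEpsDisjointnessPreserving ε T)
    {t : K} (hsmall : ∀ m, |T (single m) t| ≤ ε) (x : C₀(ℕ, ℝ)) :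
    |T x t| ≤ 3 * ε * ‖x‖ := by
  have hε : 0 ≤ ε := (abs_nonneg _).trans (hsmall 0)
  rw [mul_assoc]
  refine abs_le_three_mul_of_tendsto (f := fun N => T (x.indicator (Set.Iio N)) t)
    (((continuous_eval_const t).comp T.continuous).tendsto x |>.comp (tendsto_indicator_Iio x))
    (by rw [indicator_Iio_zero, map_zero, ContinuousMap.zero_apply, abs_zero]; positivity)
    (fun N => ?_) (fun N => ?_)
  · simp only [indicator_Iio_succ, map_add, map_smul, ContinuousMap.add_apply,
      ContinuousMap.smul_apply, smul_eq_mul, add_sub_cancel_left, abs_mul, mul_comm ε]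
    exact mul_le_mul (x.abs_apply_le_norm N) (hsmall N) (abs_nonneg _) (norm_nonneg x)
  · rw [← ContinuousMap.sub_apply, ← map_sub, sub_indicator]
    refine (hT.min_abs_apply_le (min_abs_indicator_compl x x _) t).trans ?_
    exact mul_le_mul_of_nonneg_left (max_le (norm_indicator_le x _) (norm_indicator_le x _)) hε

end IsEpsDisjointnessPreserving

section ThresholdApprox

variable {K : Type*} [TopologicalSpace K] {ε : ℝ} {T : C₀(ℕ, ℝ) →L[ℝ] C(K, ℝ)}

noncomputable def thresholdedColumn (T : C₀(ℕ, ℝ) →L[ℝ] C(K, ℝ)) (ε : ℝ) (n : ℕ) : C(K, ℝ) :=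
  ⟨fun t => softThreshold ε (T (single n) t),
    (softThreshold.continuous ε).comp (T (single n)).continuous⟩

@[simp] theorem thresholdedColumn_apply (n : ℕ) (t : K) :
    thresholdedColumn T ε n t = softThreshold ε (T (single n) t) := rfl

variable [CompactSpace K]

theorem norm_thresholdedColumn_le (hε : 0 ≤ ε) (n : ℕ) : ‖thresholdedColumn T ε n‖ ≤ ‖T‖ := by
  refine (ContinuousMap.norm_le _ (norm_nonneg T)).2 fun t => ?_
  calc ‖thresholdedColumn T ε n t‖ ≤ |T (single n) t| := softThreshold.abs_le_abs hε _
    _ ≤ ‖T (single n)‖ := (T (single n)).abs_apply_le_norm t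
    _ ≤ ‖T‖ := T.le_of_opNorm_le_of_le le_rfl (norm_single_le n) |>.trans_eq (mul_one _)

namespace IsEpsDisjointnessPreserving

theorem pairwise_disjoint_support_thresholdedColumn (hT : IsEpsDisjointnessPreserving ε T)
    (hε : 0 ≤ ε) : Pairwise (Disjoint on fun n => support (thresholdedColumn T ε n)) := by
  intro m n hmn
  refine Set.disjoint_left.2 fun t hm hn => ?_
  rw [mem_support, thresholdedColumn_apply, ne_eq, softThreshold.eq_zero_iff hε, not_le]
    at hm hn
  linarith [hT.min_abs_apply_single_le hε hmn t, lt_min hm hn]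

noncomputable def thresholdApprox (hT : IsEpsDisjointnessPreserving ε T) (hε : 0 ≤ ε) :
    C₀(ℕ, ℝ) →L[ℝ] C(K, ℝ) :=
  disjointSeriesCLM (hT.pairwise_disjoint_support_thresholdedColumn hε)
    (norm_thresholdedColumn_le hε)

variable (hT : IsEpsDisjointnessPreserving ε T) (hε : 0 ≤ ε)

theorem exists_thresholdApprox_apply_eq (x : C₀(ℕ, ℝ)) (t : K) :
    ∃ n, (∀ m ≠ n, thresholdedColumn T ε m t = 0) ∧
      hT.thresholdApprox hε x t = x n * softThreshold ε (T (single n) t) := by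
  obtain ⟨n, hn⟩ :=
    exists_forall_ne_apply_eq_zero (hT.pairwise_disjoint_support_thresholdedColumn hε) t
  exact ⟨n, hn, disjointSeriesCLM_apply_of_forall_ne x hn⟩

theorem thresholdApprox_inf_eq_zero {x y : C₀(ℕ, ℝ)} (hxy : ∀ n, min |x n| |y n| = 0) :
    |hT.thresholdApprox hε x| ⊓ |hT.thresholdApprox hε y| = 0 :=
  disjointSeriesCLM_inf_eq_zero hxy

theorem norm_thresholdApprox_le : ‖hT.thresholdApprox hε‖ ≤ ‖T‖ :=
  norm_disjointSeriesCLM_le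

theorem norm_sub_thresholdApprox_le : ‖T - hT.thresholdApprox hε‖ ≤ 3 * ε := by
  refine ContinuousLinearMap.opNorm_le_bound _ (by positivity) fun x => ?_
  refine (ContinuousMap.norm_le _ (by positivity)).2 fun t => ?_
  obtain ⟨n, hn, hS⟩ := hT.exists_thresholdApprox_apply_eq hε x t
  rw [_root_.sub_apply, ContinuousMap.sub_apply, hS, Real.norm_eq_abs]
  by_cases hcol : softThreshold ε (T (single n) t) = 0
  · have hsmall : ∀ m, |T (single m) t| ≤ ε := fun m => by
      rcases eq_or_ne m n with rfl | hm
      · exact (softThreshold.eq_zero_iff hε).1 hcol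
      · exact (softThreshold.eq_zero_iff hε).1 (hn m hm)
    rw [hcol, mul_zero, sub_zero]
    exact hT.abs_apply_le_of_forall_abs_apply_single_le hsmall x
  · have hbig : ε < |T (single n) t| := not_le.1 ((softThreshold.eq_zero_iff hε).not.1 hcol)
    calc |T x t - x n * softThreshold ε (T (single n) t)|
        ≤ |T x t - x n * T (single n) t|
          + |x n| * |T (single n) t - softThreshold ε (T (single n) t)| := by
          rw [← abs_mul]
          exact (abs_add_le _ _).trans_eq' (by ring_nf)
      _ ≤ ε * ‖x‖ + ‖x‖ * ε := add_le_add (hT.abs_apply_sub_le_of_lt hε hbig x)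
          (mul_le_mul (x.abs_apply_le_norm n) (softThreshold.abs_sub_le hε _) (abs_nonneg _)
            (norm_nonneg x))
      _ ≤ 3 * ε * ‖x‖ := by nlinarith [norm_nonneg x]

theorem thresholdApprox_nonneg (hpos : ∀ x : C₀(ℕ, ℝ), (∀ n, 0 ≤ x n) → 0 ≤ T x)
    {x : C₀(ℕ, ℝ)} (hx : ∀ n, 0 ≤ x n) : 0 ≤ hT.thresholdApprox hε x := by
  refine ContinuousMap.le_def.2 fun t => ?_
  obtain ⟨n, -, hS⟩ := hT.exists_thresholdApprox_apply_eq hε x t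
  rw [ContinuousMap.zero_apply, hS]
  have hcol : 0 ≤ T (single n) t := hpos _ (fun m => by by_cases hm : m = n <;> simp [hm]) t
  exact mul_nonneg (hx n) (softThreshold.nonneg hε hcol)

theorem thresholdApprox_le (hpos : ∀ x : C₀(ℕ, ℝ), (∀ n, 0 ≤ x n) → 0 ≤ T x)
    {x : C₀(ℕ, ℝ)} (hx : ∀ n, 0 ≤ x n) : hT.thresholdApprox hε x ≤ T x := by
  refine ContinuousMap.le_def.2 fun t => ?_
  obtain ⟨n, -, hS⟩ := hT.exists_thresholdApprox_apply_eq hε x t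
  rw [hS]
  have hcol : 0 ≤ T (single n) t := hpos _ (fun m => by by_cases hm : m = n <;> simp [hm]) t
  exact (mul_le_mul_of_nonneg_left (softThreshold.le_self hcol) (hx n)).trans
    (mul_apply_single_le_apply T hpos hx n t)

end IsEpsDisjointnessPreserving

end ThresholdApprox

theorem stmt8_general (K : Type*) [TopologicalSpace K] [CompactSpace K]
    (ε : ℝ) (hε : 0 < ε) (T : C₀(ℕ, ℝ) →L[ℝ] C(K, ℝ))
    (hDP : ∀ x y : C₀(ℕ, ℝ), (∀ n : ℕ, min |x n| |y n| = 0) →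
      ‖|T x| ⊓ |T y|‖ ≤ ε * max ‖x‖ ‖y‖) :
    (∃ S : C₀(ℕ, ℝ) →L[ℝ] C(K, ℝ),
      (∀ x y : C₀(ℕ, ℝ), (∀ n : ℕ, min |x n| |y n| = 0) → |S x| ⊓ |S y| = 0) ∧
      ‖S‖ ≤ ‖T‖ ∧ ‖T - S‖ ≤ 257 * ε) ∧
    ((∀ x : C₀(ℕ, ℝ), (∀ n : ℕ, 0 ≤ x n) → 0 ≤ T x) →
      ∃ S : C₀(ℕ, ℝ) →L[ℝ] C(K, ℝ),
        (∀ x y : C₀(ℕ, ℝ), (∀ n : ℕ, min |x n| |y n| = 0) → |S x| ⊓ |S y| = 0) ∧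
        ‖S‖ ≤ ‖T‖ ∧ ‖T - S‖ ≤ 257 * ε ∧
        (∀ x : C₀(ℕ, ℝ), (∀ n : ℕ, 0 ≤ x n) → 0 ≤ S x) ∧
        (∀ x : C₀(ℕ, ℝ), (∀ n : ℕ, 0 ≤ x n) → S x ≤ T x)) := by
  have hT : IsEpsDisjointnessPreserving ε T := hDP
  have hST : ‖T - hT.thresholdApprox hε.le‖ ≤ 257 * ε :=
    (hT.norm_sub_thresholdApprox_le hε.le).trans (by linarith)
  exact ⟨⟨_, fun _ _ => hT.thresholdApprox_inf_eq_zero hε.le, hT.norm_thresholdApprox_le hε.le,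
    hST⟩, fun hpos => ⟨_, fun _ _ => hT.thresholdApprox_inf_eq_zero hε.le,
      hT.norm_thresholdApprox_le hε.le, hST, fun _ => hT.thresholdApprox_nonneg hε.le hpos,
      fun _ => hT.thresholdApprox_le hε.le hpos⟩⟩

/-- An `ε`-disjointness preserving operator `T : c₀ → C(K)` can be approximated
by a disjointness preserving operator `S` with `‖S‖ ≤ ‖T‖` and `‖T - S‖ ≤ 257 ε`; if `T` is
positive then `S` can be chosen with `0 ≤ S ≤ T`.  Here `c₀ = C₀(ℕ, ℝ)`, the sequences
vanishing at infinity, with the sup norm and coordinatewise order. -/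
theorem stmt8 (K : Type*) [TopologicalSpace K] [CompactSpace K] [T2Space K]
    (ε : ℝ) (hε : 0 < ε) (T : C₀(ℕ, ℝ) →L[ℝ] C(K, ℝ))
    (hDP : ∀ x y : C₀(ℕ, ℝ), (∀ n : ℕ, min |x n| |y n| = 0) →
      ‖|T x| ⊓ |T y|‖ ≤ ε * max ‖x‖ ‖y‖) :
    (∃ S : C₀(ℕ, ℝ) →L[ℝ] C(K, ℝ),
      (∀ x y : C₀(ℕ, ℝ), (∀ n : ℕ, min |x n| |y n| = 0) → |S x| ⊓ |S y| = 0) ∧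
      ‖S‖ ≤ ‖T‖ ∧ ‖T - S‖ ≤ 257 * ε) ∧
    ((∀ x : C₀(ℕ, ℝ), (∀ n : ℕ, 0 ≤ x n) → 0 ≤ T x) →
      ∃ S : C₀(ℕ, ℝ) →L[ℝ] C(K, ℝ),
        (∀ x y : C₀(ℕ, ℝ), (∀ n : ℕ, min |x n| |y n| = 0) → |S x| ⊓ |S y| = 0) ∧
        ‖S‖ ≤ ‖T‖ ∧ ‖T - S‖ ≤ 257 * ε ∧
        (∀ x : C₀(ℕ, ℝ), (∀ n : ℕ, 0 ≤ x n) → 0 ≤ S x) ∧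
        (∀ x : C₀(ℕ, ℝ), (∀ n : ℕ, 0 ≤ x n) → S x ≤ T x)) :=
  stmt8_general K ε hε T hDP
end
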